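/- Let H be a Hopf algebra, A an H-module algebra with adjoint action via u : H → A, F a counital 2-cocycle, and V an A-module with action ▷_A. Define the H-action on V by h ▷ v = u(h) ▷_A v. Then V is an (H,A)-module, and the Giaquinto–Zhang twisted action ▷_F = ▷_A ∘ (F⁻¹ ▷ -) of A_F on V equals the pullback of ▷_A along the isomorphism η : A_F → A, i.e. a ▷_F v = η(a) ▷_A v for all a ∈ A, v ∈ V. -/

import Mathlib

open TensorProduct LinearMap

noncomputable section

variable (k : Type) [Field k]
variable (H : Type) [Ring H] [HopfAlgebra k H]

/-- `F`, with inverse `Finv`, is a counital 2-cocycle on the Hopf algebra `H`: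
`(F⊗1)·(Δ⊗id)(F) = (1⊗F)·(id⊗Δ)(F)` and `(ε⊗id)(F) = 1 = (id⊗ε)(F)`. -/
def IsCocycle (F Finv : H ⊗[k] H) : Prop :=
  F * Finv = 1 ∧ Finv * F = 1 ∧
  (F ⊗ₜ[k] (1 : H)) * (TensorProduct.map Coalgebra.comul LinearMap.id F) =
    (TensorProduct.assoc k H H H).symm
      (((1 : H) ⊗ₜ[k] F) * (TensorProduct.map LinearMap.id Coalgebra.comul F)) ∧
  TensorProduct.map Coalgebra.counit LinearMap.id F = 1 ∧
  TensorProduct.map LinearMap.id Coalgebra.counit F = 1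

/-- A (left) module-algebra structure of a Hopf algebra `H` on an algebra `A`:
`A` is an algebra object in the category of `H`-modules. -/
structure ModuleAlgebra (A : Type) [Ring A] [Algebra k A] where
  act : H →ₗ[k] Module.End k A
  act_one : act 1 = 1
  act_mul : ∀ g h : H, act (g * h) = act g * act h
  act_algebra_unit : ∀ h : H, act h (1 : A) = (Coalgebra.counit h : k) • (1 : A)
  act_algebra_mul : ∀ (h : H) (a b : A),
    act h (a * b) = LinearMap.mul' k A
      ((TensorProduct.homTensorHomMap (RingHom.id k) A A A A
        (TensorProduct.map act act (Coalgebra.comul h))) (a ⊗ₜ[k] b))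

variable {k H}

/-- The operator on `A ⊗ B` obtained by letting an element `x ∈ H ⊗ H` act
legwise through the actions `actA`, `actB`. -/
def legAct {A B : Type} [AddCommGroup A] [Module k A] [AddCommGroup B] [Module k B]
    (actA : H →ₗ[k] Module.End k A) (actB : H →ₗ[k] Module.End k B) (x : H ⊗[k] H) :
    A ⊗[k] B →ₗ[k] A ⊗[k] B :=
  TensorProduct.homTensorHomMap (RingHom.id k) A B A B (TensorProduct.map actA actB x)

/-- The twisted product `m_F = m ∘ (F⁻¹ ▷ −)` on `A`. -/
def twistedMul {A : Type} [Ring A] [Algebra k A] (ma : ModuleAlgebra k H A)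
    (Finv : H ⊗[k] H) : A ⊗[k] A →ₗ[k] A :=
  LinearMap.mul' k A ∘ₗ legAct ma.act ma.act Finv

/-- The twisted coproduct `Δ_F(h) = F·Δ(h)·F⁻¹`. -/
def twistedComul (F Finv : H ⊗[k] H) : H →ₗ[k] H ⊗[k] H :=
  LinearMap.mulLeft k F ∘ₗ LinearMap.mulRight k Finv ∘ₗ Coalgebra.comul


/-- A representation of a `k`-algebra `A` on a `k`-vector space `V`. -/
structure AlgRep (A : Type) [Ring A] [Algebra k A] (V : Type) [AddCommGroup V] [Module k V] where
  ρ : A →ₗ[k] Module.End k V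
  ρ_one : ρ 1 = 1
  ρ_mul : ∀ a b : A, ρ (a * b) = ρ a * ρ b

/-- `V` is an `(H,A)`-module: the `A`-action is a morphism of `H`-modules, i.e.
`h ▷ (a ▷_A v) = (h₍₁₎ ▷ a) ▷_A (h₍₂₎ ▷ v)`. -/
def IsHAModule {A V : Type} [Ring A] [Algebra k A] [AddCommGroup V] [Module k V]
    (ma : ModuleAlgebra k H A) (ρA : AlgRep (k := k) A V) (ρH : AlgRep (k := k) H V) : Prop :=
  ∀ (h : H) (a : A) (v : V),
    ρH.ρ h (ρA.ρ a v) =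
      TensorProduct.lift ρA.ρ (legAct ma.act ρH.ρ (Coalgebra.comul h) (a ⊗ₜ[k] v))

/-- The Giaquinto–Zhang twisted action `▷_F = ▷_A ∘ (F⁻¹ ▷ −)` of `A_F` on `V`. -/
def twistedAct {A V : Type} [Ring A] [Algebra k A] [AddCommGroup V] [Module k V]
    (ma : ModuleAlgebra k H A) (ρA : AlgRep (k := k) A V) (ρH : AlgRep (k := k) H V)
    (Finv : H ⊗[k] H) : A →ₗ[k] Module.End k V :=
  TensorProduct.curry (TensorProduct.lift ρA.ρ ∘ₗ legAct ma.act ρH.ρ Finv)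

/-- Generic smash-product multiplication on `A ⊗ H`, for a multiplication `μA` on `A`,
comultiplication `δ` and multiplication `μH` on `H`, and action `actUn : H ⊗ A → A`:
`(a # h)(b # g) = a·(h₍₁₎ ▷ b) # h₍₂₎·g`. -/
def smashMulMap {A : Type} [AddCommGroup A] [Module k A]
    (μA : A ⊗[k] A →ₗ[k] A) (δ : H →ₗ[k] H ⊗[k] H) (μH : H ⊗[k] H →ₗ[k] H)
    (actUn : H ⊗[k] A →ₗ[k] A) :
    (A ⊗[k] H) ⊗[k] (A ⊗[k] H) →ₗ[k] A ⊗[k] H :=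
  TensorProduct.map μA LinearMap.id
    ∘ₗ (TensorProduct.assoc k A A H).symm.toLinearMap
    ∘ₗ (TensorProduct.map LinearMap.id
          ((TensorProduct.map actUn μH)
            ∘ₗ (TensorProduct.tensorTensorTensorComm k H H A H).toLinearMap))
    ∘ₗ (TensorProduct.assoc k A (H ⊗[k] H) (A ⊗[k] H)).toLinearMap
    ∘ₗ TensorProduct.map (TensorProduct.map LinearMap.id δ) LinearMap.id

/-- The adjoint (strongly inner) action `h ▷ a = u(h₍₁₎)·a·u(S(h₍₂₎))` of `H` on `A`,
along an algebra homomorphism `u : H → A`. -/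
def adjointAction {A : Type} [Ring A] [Algebra k A] (u : H →ₐ[k] A) :
    H →ₗ[k] Module.End k A :=
  LinearMap.mul' k (Module.End k A)
    ∘ₗ TensorProduct.map (LinearMap.mul k A ∘ₗ u.toLinearMap)
        ((LinearMap.mul k A).flip ∘ₗ u.toLinearMap ∘ₗ HopfAlgebra.antipode (R := k))
    ∘ₗ Coalgebra.comul

/-- The Kulish–Mudrov map `η : A_F → A`, `a ↦ (f' ▷ a)·u(f'')` with `F⁻¹ = f' ⊗ f''`. -/
def kulishMudrovEta {A : Type} [Ring A] [Algebra k A] (ma : ModuleAlgebra k H A)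
    (u : H →ₐ[k] A) (Finv : H ⊗[k] H) : A →ₗ[k] A :=
  LinearMap.mul' k A
    ∘ₗ TensorProduct.map (TensorProduct.lift ma.act) u.toLinearMap
    ∘ₗ (TensorProduct.assoc k H A H).symm.toLinearMap
    ∘ₗ TensorProduct.map LinearMap.id (TensorProduct.comm k H A).toLinearMap
    ∘ₗ (TensorProduct.assoc k H H A).toLinearMap
    ∘ₗ TensorProduct.mk k (H ⊗[k] H) A Finv

/-!
Since `▷_A` is multiplicative, letting `x = x' ⊗ x'' ∈ H ⊗ H` act on `a ⊗ v` through
`▷` on `A` and `h ▷ v = u(h) ▷_A v` on `V` and then applying `▷_A` gives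
`((x' ▷ a)·u(x'')) ▷_A v`. For `x = F⁻¹` this is `η(a) ▷_A v`. For `x = Δh` the adjoint action
gives `(h₁ ▷ a)·u(h₂) = u(h₁)·a·u(S(h₂)h₃) = u(h)·a`, so the result is `h ▷ (a ▷_A v)`.
-/

open Coalgebra HopfAlgebra

theorem sum_counit_right_smul {ι : Type*} {h : H} (r : Coalgebra.Repr k h ι) :
    ∑ i ∈ r.index, counit (R := k) (r.right i) • r.left i = h := by
  simpa only [map_sum, TensorProduct.rid_tmul, one_smul] using
    congr(TensorProduct.rid k H $(sum_tmul_counit_eq r))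

section

variable {A V : Type} [Ring A] [Algebra k A] [AddCommGroup V] [Module k V]

def AlgRep.pullback {B : Type} [Ring B] [Algebra k B] (ρ : AlgRep (k := k) A V)
    (f : B →ₐ[k] A) : AlgRep (k := k) B V where
  ρ := ρ.ρ ∘ₗ f.toLinearMap
  ρ_one := by simp [ρ.ρ_one]
  ρ_mul a b := by simp [ρ.ρ_mul]

theorem kulishMudrovEta_apply (ma : ModuleAlgebra k H A) (u : H →ₐ[k] A) (Finv : H ⊗[k] H)
    (a : A) :
    kulishMudrovEta ma u Finv a = mul' k A (map (ma.act.flip a) u.toLinearMap Finv) := by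
  induction Finv using TensorProduct.induction_on with
  | zero => simp [kulishMudrovEta]
  | tmul x y => simp [kulishMudrovEta]
  | add x y hx hy => simp_all [kulishMudrovEta]

theorem lift_legAct_pullback_tmul (act : H →ₗ[k] Module.End k A) (ρ : AlgRep (k := k) A V)
    (u : H →ₐ[k] A) (x : H ⊗[k] H) (a : A) (v : V) :
    lift ρ.ρ (legAct act (ρ.pullback u).ρ x (a ⊗ₜ v)) =
      ρ.ρ (mul' k A (map (act.flip a) u.toLinearMap x)) v := by
  induction x using TensorProduct.induction_on with
  | zero => simp [legAct]
  | tmul y z => simp [legAct, AlgRep.pullback, ρ.ρ_mul]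
  | add x y hx hy => simp_all [legAct]

theorem adjointAction_apply (u : H →ₐ[k] A) {ι : Type*} {h : H} (r : Coalgebra.Repr k h ι)
    (a : A) :
    adjointAction u h a = ∑ i ∈ r.index, u (r.left i) * a * u (antipode k (r.right i)) := by
  simp [adjointAction, ← r.eq, map_sum, mul_assoc]

theorem sum_adjointAction_mul_eq (u : H →ₐ[k] A) {ι : Type*} {h : H}
    (r : Coalgebra.Repr k h ι) (a : A) :
    ∑ i ∈ r.index, adjointAction u (r.left i) a * u (r.right i) = u h * a := by
  let r₁ := fun i => ℛ k (r.left i)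
  let r₂ := fun i => ℛ k (r.right i)
  let Φ : H ⊗[k] (H ⊗[k] H) →ₗ[k] A := mul' k A ∘ₗ map (mulRight k a ∘ₗ u.toLinearMap)
    (mul' k A ∘ₗ map (u.toLinearMap ∘ₗ antipode k) u)
  have hΦ : ∀ x y z, Φ (x ⊗ₜ (y ⊗ₜ z)) = u x * a * u (antipode k y * z) := by
    simp [Φ]
  calc ∑ i ∈ r.index, adjointAction u (r.left i) a * u (r.right i)
      = Φ (∑ i ∈ r.index, ∑ j ∈ (r₁ i).index,
          (r₁ i).left j ⊗ₜ ((r₁ i).right j ⊗ₜ r.right i)) := by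
        simp [map_sum, hΦ, adjointAction_apply u (r₁ _), Finset.sum_mul, mul_assoc]
    _ = Φ (∑ i ∈ r.index, ∑ j ∈ (r₂ i).index,
          r.left i ⊗ₜ ((r₂ i).left j ⊗ₜ (r₂ i).right j)) := by
        rw [sum_tmul_tmul_eq]
    _ = ∑ i ∈ r.index, counit (R := k) (r.right i) • (u (r.left i) * a) := by
        simp only [map_sum, hΦ]
        refine Finset.sum_congr rfl fun i _ => ?_
        rw [← Finset.mul_sum, ← map_sum, sum_antipode_mul_eq_smul, map_smul, map_one,
          mul_smul_one]
    _ = u h * a := by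
        conv_rhs => rw [← sum_counit_right_smul r]
        simp [map_sum, Finset.sum_mul]

theorem isHAModule_pullback (ma : ModuleAlgebra k H A) (u : H →ₐ[k] A)
    (hadj : ma.act = adjointAction u) (ρ : AlgRep (k := k) A V) :
    IsHAModule ma ρ (ρ.pullback u) := by
  intro h a v
  have hsmash : mul' k A (map (ma.act.flip a) u.toLinearMap (comul h)) = u h * a := by
    rw [hadj, ← (ℛ k h).eq]
    simpa [map_sum] using sum_adjointAction_mul_eq u (ℛ k h) a
  rw [lift_legAct_pullback_tmul, hsmash, ρ.ρ_mul]
  rfl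

end

theorem twistedAct_eq_pullback_eta {A V : Type} [Ring A] [Algebra k A]
    [AddCommGroup V] [Module k V]
    (ma : ModuleAlgebra k H A) (u : H →ₐ[k] A) (hadj : ma.act = adjointAction u)
    (Finv : H ⊗[k] H)
    (ρA : AlgRep (k := k) A V) :
    ∃ ρH : AlgRep (k := k) H V,
      ρH.ρ = ρA.ρ ∘ₗ u.toLinearMap ∧
      IsHAModule ma ρA ρH ∧
      (∀ (a : A) (v : V),
        twistedAct ma ρA ρH Finv a v = ρA.ρ (kulishMudrovEta ma u Finv a) v) := by
  refine ⟨ρA.pullback u, rfl, isHAModule_pullback ma u hadj ρA, fun a v => ?_⟩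
  rw [kulishMudrovEta_apply, ← lift_legAct_pullback_tmul]
  rfl

end
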